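/- Let v be a 4×4 real matrix. There exists x₀ ∈ ℝ⁴ such that for every t ∈ ℝ the four vectors exp(t·v)·x₀, v·exp(t·v)·x₀, v²·exp(t·v)·x₀, v³·exp(t·v)·x₀ (that is, γ(t), γ′(t), γ″(t), γ‴(t) for the curve γ(t) = exp(t·v)·x₀) are linearly independent — i.e., some orbit of the flow exp(t·v) is a nondegenerate curve — if and only if every eigenvalue μ ∈ ℂ of v_ℂ has geometric multiplicity exactly 1 (dim_ℂ ker(v_ℂ − μ·I) ≤ 1 for all μ ∈ ℂ), i.e., if and only if v has precisely one Jordan block for each eigenvalue (equivalently the minimal polynomial of v equals its characteristic polynomial). -/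

import Mathlib

open Matrix

/-- The geometric multiplicity of `μ ∈ ℂ` as an eigenvalue of (the complexification of)
a real 4×4 matrix `v`: the complex dimension of `ker (v_ℂ − μ·I)`. -/
noncomputable def geomMult (v : Matrix (Fin 4) (Fin 4) ℝ) (μ : ℂ) : ℕ :=
  Module.finrank ℂ
    (LinearMap.ker (Matrix.toLin' (v.map (fun x => (x : ℂ)) - μ • (1 : Matrix (Fin 4) (Fin 4) ℂ))))

namespace NondegOrbitAux

open Polynomial Module LinearMap

variable {K : Type*} [Field K] {V : Type*} [AddCommGroup V] [Module K V] [FiniteDimensional K V]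

lemma finrank_ker_mul_le (g h : Module.End K V) :
    Module.finrank K (LinearMap.ker (g * h)) ≤
      Module.finrank K (LinearMap.ker g) + Module.finrank K (LinearMap.ker h) := by
  set W := LinearMap.ker (g * h) with hW
  let φ : W →ₗ[K] V := h ∘ₗ W.subtype
  have h1 : Module.finrank K (LinearMap.range φ) ≤ Module.finrank K (LinearMap.ker g) := by
    apply Submodule.finrank_mono
    rintro x ⟨⟨y, hy⟩, rfl⟩
    simpa [φ, hW, LinearMap.mem_ker, Module.End.mul_apply] using hy
  have h2 : Module.finrank K (LinearMap.ker φ) ≤ Module.finrank K (LinearMap.ker h) := by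
    have hle : Submodule.map W.subtype (LinearMap.ker φ) ≤ LinearMap.ker h := by
      rintro x ⟨⟨y, hy⟩, hk, rfl⟩
      simpa [φ] using hk
    calc Module.finrank K (LinearMap.ker φ)
        = Module.finrank K (Submodule.map W.subtype (LinearMap.ker φ)) :=
          (Submodule.finrank_map_subtype_eq W _).symm
      _ ≤ _ := Submodule.finrank_mono hle
  have h3 := LinearMap.finrank_range_add_finrank_ker φ
  have h4 : Module.finrank K W = Module.finrank K (LinearMap.ker (g * h)) := rfl
  omega

lemma finrank_ker_pow_le (g : Module.End K V) (hg : Module.finrank K (LinearMap.ker g) ≤ 1) :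
    ∀ k : ℕ, Module.finrank K (LinearMap.ker (g ^ k)) ≤ k
  | 0 => by
      simp [pow_zero, Module.End.one_eq_id, LinearMap.ker_id]
  | (k + 1) => by
      have := finrank_ker_mul_le (g ^ k) g
      have := finrank_ker_pow_le g hg k
      rw [pow_succ]
      omega

lemma ker_pow_mono (g : Module.End K V) {a b : ℕ} (hab : a ≤ b) :
    LinearMap.ker (g ^ a) ≤ LinearMap.ker (g ^ b) := by
  intro x hx
  rw [LinearMap.mem_ker] at hx ⊢
  obtain ⟨c, rfl⟩ := Nat.exists_eq_add_of_le hab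
  rw [add_comm, pow_add, Module.End.mul_apply, hx, map_zero]

lemma ker_pow_succ_eq (g : Module.End K V) (d : ℕ)
    (hle : Module.finrank K (LinearMap.ker (g ^ (d + 1))) ≤ d) :
    LinearMap.ker (g ^ d) = LinearMap.ker (g ^ (d + 1)) := by
  by_contra hne
  have hstrict : ∀ j, j ≤ d → LinearMap.ker (g ^ j) < LinearMap.ker (g ^ (j + 1)) := by
    intro j hj
    refine lt_of_le_of_ne (ker_pow_mono g (Nat.le_succ j)) fun h => hne ?_
    have h1 := Module.End.ker_pow_constant h (d - j)
    have h2 := Module.End.ker_pow_constant h (d + 1 - j)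
    rw [show j + (d - j) = d by omega] at h1
    rw [show j + (d + 1 - j) = d + 1 by omega] at h2
    rw [← h1, h2]
  have hrank : ∀ j, j ≤ d + 1 → j ≤ Module.finrank K (LinearMap.ker (g ^ j)) := by
    intro j
    induction j with
    | zero => intro _; exact Nat.zero_le _
    | succ i ih =>
        intro hi
        have h5 := Submodule.finrank_lt_finrank_of_lt (hstrict i (by omega))
        have h6 := ih (by omega)
        omega
  have := hrank (d + 1) le_rfl
  omega

lemma finrank_biSup_le {ι : Type*} (s : Finset ι) (p : ι → Submodule K V) :
    Module.finrank K ((⨆ μ ∈ s, p μ : Submodule K V) : Submodule K V) ≤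
      ∑ μ ∈ s, Module.finrank K (p μ) := by
  classical
  induction s using Finset.induction_on with
  | empty => simp
  | insert _ _ ha ih =>
      rename_i a s'
      rw [Finset.iSup_insert, Finset.sum_insert ha]
      have h1 := Submodule.finrank_sup_add_finrank_inf_eq (p a) (⨆ μ ∈ s', p μ)
      omega

end NondegOrbitAux

section ComplexSide

open Polynomial Module LinearMap NondegOrbitAux

/-- The hard direction over `ℂ`: small geometric multiplicities give a cyclic vector. -/
lemma exists_cyclic_of_geomMult_le_one (A : Matrix (Fin 4) (Fin 4) ℂ)
    (hgeo : ∀ μ : ℂ, Module.finrank ℂ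
      (LinearMap.ker (Matrix.toLin' (A - μ • (1 : Matrix (Fin 4) (Fin 4) ℂ)))) ≤ 1) :
    ∃ z : Fin 4 → ℂ, LinearIndependent ℂ (fun k : Fin 4 => (A ^ (k : ℕ)).mulVec z) := by
  classical
  set f : Module.End ℂ (Fin 4 → ℂ) := Matrix.toLin' A with hfdef
  set g : ℂ → Module.End ℂ (Fin 4 → ℂ) :=
    fun μ => f - μ • (1 : Module.End ℂ (Fin 4 → ℂ)) with hgdef
  have hdim : Module.finrank ℂ (Fin 4 → ℂ) = 4 := by simp
  have hgeo' : ∀ μ : ℂ, Module.finrank ℂ (LinearMap.ker (g μ)) ≤ 1 := by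
    intro μ
    have : Matrix.toLin' (A - μ • (1 : Matrix (Fin 4) (Fin 4) ℂ)) = g μ := by
      rw [map_sub, _root_.map_smul, Matrix.toLin'_one]
      rfl
    rw [← this]
    exact hgeo μ
  set V : ℂ → Submodule ℂ (Fin 4 → ℂ) := fun μ => f.maxGenEigenspace μ with hVdef
  have hVg : ∀ μ, V μ = LinearMap.ker ((g μ) ^ 4) := by
    intro μ
    show f.maxGenEigenspace μ = LinearMap.ker ((g μ) ^ 4)
    have h1 : f.maxGenEigenspace μ = f.genEigenspace μ (4 : ℕ) := by
      refine le_antisymm ?_ ((f.genEigenspace μ).monotone le_top)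
      have := f.genEigenspace_le_genEigenspace_finrank μ ⊤
      rwa [hdim] at this
    rw [h1, Module.End.genEigenspace_nat]
  set d : ℂ → ℕ := fun μ => Module.finrank ℂ (V μ) with hddef
  have hd4 : ∀ μ, d μ ≤ 4 := by
    intro μ
    have := Submodule.finrank_le (V μ)
    rwa [hdim] at this
  have hVd : ∀ μ, V μ = LinearMap.ker ((g μ) ^ (d μ)) := by
    intro μ
    have hstep : LinearMap.ker ((g μ) ^ (d μ)) = LinearMap.ker ((g μ) ^ (d μ + 1)) := by
      apply ker_pow_succ_eq
      rcases Nat.lt_or_ge (d μ) 4 with h | h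
      · have hker : LinearMap.ker ((g μ) ^ (d μ + 1)) ≤ V μ := by
          rw [hVg]; exact ker_pow_mono _ (by omega)
        exact Submodule.finrank_mono hker
      · have := Submodule.finrank_le (LinearMap.ker ((g μ) ^ (d μ + 1)))
        rw [hdim] at this
        omega
    have h2 := Module.End.ker_pow_constant hstep (4 - d μ)
    rw [show d μ + (4 - d μ) = 4 from by have := hd4 μ; omega] at h2
    rw [hVg, h2]
  have hm0 : minpoly ℂ f ≠ 0 := minpoly.ne_zero_of_finite ℂ f
  set S : Finset ℂ := (minpoly ℂ f).roots.toFinset with hSdef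
  have hSbot : ∀ μ ∉ S, V μ = ⊥ := by
    intro μ hμ
    by_contra hb
    have hev : f.HasUnifEigenvalue μ ⊤ := hb
    have hev1 : f.HasEigenvalue μ := hev.lt zero_lt_one
    have hroot := Module.End.isRoot_of_hasEigenvalue hev1
    exact hμ (Multiset.mem_toFinset.mpr ((Polynomial.mem_roots hm0).mpr hroot))
  have hStop : (⨆ μ ∈ S, V μ) = ⊤ := by
    refine le_antisymm le_top ?_
    rw [← Module.End.iSup_maxGenEigenspace_eq_top f]
    apply iSup_le
    intro μ
    by_cases hμ : μ ∈ S
    · exact le_biSup _ hμ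
    · rw [show f.maxGenEigenspace μ = V μ from rfl, hSbot μ hμ]
      exact bot_le
  have hVne : ∀ μ ∈ S, V μ ≠ ⊥ := by
    intro μ hμ hbot
    have hroot : (minpoly ℂ f).IsRoot μ := by
      have := Multiset.mem_toFinset.mp hμ
      exact (Polynomial.mem_roots hm0).mp this
    have hev : f.HasEigenvalue μ := Module.End.hasEigenvalue_of_isRoot hroot
    have h1 : f.genEigenspace μ 1 ≤ V μ := (f.genEigenspace μ).monotone le_top
    rw [hbot, le_bot_iff] at h1
    exact hev h1
  have hdpos : ∀ μ ∈ S, 1 ≤ d μ := by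
    intro μ hμ
    have : d μ ≠ 0 := by
      intro h0
      exact hVne μ hμ (Submodule.finrank_eq_zero.mp h0)
    omega
  -- choose "top" vectors in each generalized eigenspace
  have hex : ∀ μ : ℂ, ∃ zz : Fin 4 → ℂ,
      μ ∈ S → (zz ∈ V μ ∧ ((g μ) ^ (d μ - 1)) zz ≠ 0) := by
    intro μ
    by_cases hμ : μ ∈ S
    · have hnotle : ¬ (V μ ≤ LinearMap.ker ((g μ) ^ (d μ - 1))) := by
        intro hle
        have h1 := Submodule.finrank_mono hle
        have h2 := finrank_ker_pow_le (g μ) (hgeo' μ) (d μ - 1)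
        have h3 := hdpos μ hμ
        have h4 : d μ = Module.finrank ℂ (V μ) := rfl
        omega
      obtain ⟨zz, hzz1, hzz2⟩ := SetLike.not_le_iff_exists.mp hnotle
      exact ⟨zz, fun _ => ⟨hzz1, fun h => hzz2 (LinearMap.mem_ker.mpr h)⟩⟩
    · exact ⟨0, fun h => absurd h hμ⟩
  choose zf hzf using hex
  have haev : ∀ (μ : ℂ) (k : ℕ), Polynomial.aeval f ((X - C μ) ^ k) = (g μ) ^ k := by
    intro μ k
    rw [map_pow, map_sub, aeval_X, aeval_C]
    rfl
  -- each zf μ has order (X - C μ) ^ d μ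
  have horder : ∀ μ ∈ S, ∀ q : ℂ[X],
      (Polynomial.aeval f q) (zf μ) = 0 → (X - C μ) ^ (d μ) ∣ q := by
    intro μ hμ q hq
    rcases eq_or_ne q 0 with rfl | hq0
    · exact dvd_zero _
    set s := rootMultiplicity μ q with hsdef
    obtain ⟨u, hu⟩ := Polynomial.pow_rootMultiplicity_dvd q μ
    by_cases hsd : d μ ≤ s
    · exact dvd_trans (pow_dvd_pow _ hsd) ⟨u, hu⟩
    exfalso
    have hund : ¬ (X - C μ) ∣ u := by
      rintro ⟨w, hw⟩
      have hdvd : (X - C μ) ^ (s + 1) ∣ q := ⟨w, by rw [hu, hw]; ring⟩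
      exact Polynomial.pow_rootMultiplicity_not_dvd hq0 μ hdvd
    have hcop : IsCoprime ((X - C μ) ^ (d μ)) u :=
      (((Polynomial.irreducible_X_sub_C μ).coprime_iff_not_dvd.mpr hund)).pow_left
    obtain ⟨a, b, hab⟩ := hcop
    set w := ((g μ) ^ s) (zf μ) with hwdef
    have hkerz : ((g μ) ^ (d μ)) (zf μ) = 0 := by
      have := (hzf μ hμ).1
      rw [hVd μ, LinearMap.mem_ker] at this
      exact this
    have h1 : ((g μ) ^ (d μ)) w = 0 := by
      rw [hwdef, ← Module.End.mul_apply, ← pow_add, add_comm, pow_add, Module.End.mul_apply,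
        hkerz, map_zero]
    have h2 : (Polynomial.aeval f u) w = 0 := by
      have hmul : Polynomial.aeval f u * (g μ) ^ s = Polynomial.aeval f q := by
        rw [← haev μ s, ← _root_.map_mul, mul_comm u ((X - C μ) ^ s), ← hu]
      calc (Polynomial.aeval f u) w
          = (Polynomial.aeval f u * (g μ) ^ s) (zf μ) := rfl
        _ = (Polynomial.aeval f q) (zf μ) := by rw [hmul]
        _ = 0 := hq
    have h3 : w = 0 := by
      have hc := congrArg (fun p : ℂ[X] => (Polynomial.aeval f p) w) hab
      simp only [map_add, _root_.map_mul, _root_.map_one, LinearMap.add_apply,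
        Module.End.mul_apply, Module.End.one_apply, haev] at hc
      rw [h1, h2] at hc
      simpa using hc.symm
    have h4 : ((g μ) ^ (d μ - 1)) (zf μ) = 0 := by
      have heq : d μ - 1 = (d μ - 1 - s) + s := by omega
      rw [heq, pow_add, Module.End.mul_apply, ← hwdef, h3, map_zero]
    exact (hzf μ hμ).2 h4
  -- the cyclic vector
  refine ⟨∑ μ ∈ S, zf μ, ?_⟩
  set z : Fin 4 → ℂ := ∑ μ ∈ S, zf μ with hzdef
  rw [Fintype.linearIndependent_iff]
  intro c hc
  set q : ℂ[X] := ∑ k : Fin 4, C (c k) * X ^ (k : ℕ) with hqdef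
  have hfz : ∀ k : ℕ, (f ^ k) z = (A ^ k).mulVec z := by
    intro k
    induction k with
    | zero => simp [Matrix.one_mulVec]
    | succ i ih =>
        rw [pow_succ', Module.End.mul_apply, ih, hfdef, Matrix.toLin'_apply,
          Matrix.mulVec_mulVec, ← pow_succ']
  have hqz : (Polynomial.aeval f q) z = 0 := by
    have h1 : (Polynomial.aeval f q) z = ∑ k : Fin 4, c k • (f ^ (k : ℕ)) z := by
      have haq : Polynomial.aeval f q
          = ∑ k : Fin 4, c k • (f ^ (k : ℕ) : Module.End ℂ (Fin 4 → ℂ)) := by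
        rw [hqdef, map_sum]
        refine Finset.sum_congr rfl fun k _ => ?_
        rw [_root_.map_mul, aeval_C, map_pow, aeval_X, Algebra.algebraMap_eq_smul_one,
          smul_one_mul]
      rw [haq, LinearMap.sum_apply]
      exact Finset.sum_congr rfl fun k _ => by rw [LinearMap.smul_apply]
    rw [h1]
    rw [show (0 : Fin 4 → ℂ) = ∑ k : Fin 4, c k • (A ^ (k : ℕ)).mulVec z from hc.symm]
    exact Finset.sum_congr rfl fun k _ => by rw [hfz]
  have hcomm : ∀ (μ : ℂ), (g μ) ^ (d μ) * Polynomial.aeval f q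
      = Polynomial.aeval f q * (g μ) ^ (d μ) := by
    intro μ
    rw [← haev μ (d μ), ← _root_.map_mul, ← _root_.map_mul, mul_comm]
  have hmemV : ∀ μ ∈ S, (Polynomial.aeval f q) (zf μ) ∈ V μ := by
    intro μ hμ
    rw [hVd μ, LinearMap.mem_ker, ← Module.End.mul_apply, hcomm μ, Module.End.mul_apply]
    have := (hzf μ hμ).1
    rw [hVd μ, LinearMap.mem_ker] at this
    rw [this, map_zero]
  have hsum : ∑ μ ∈ S, (Polynomial.aeval f q) (zf μ) = 0 := by
    rw [← map_sum, ← hzdef, hqz]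
  have hzero : ∀ μ ∈ S, (Polynomial.aeval f q) (zf μ) = 0 := by
    have hind := Module.End.independent_maxGenEigenspace f
    intro μ hμ
    have hdis := hind μ
    have hmem2 : (Polynomial.aeval f q) (zf μ) ∈ (⨆ ν, ⨆ _ : ν ≠ μ, f.maxGenEigenspace ν) := by
      have heq : (Polynomial.aeval f q) (zf μ)
          = - ∑ ν ∈ S.erase μ, (Polynomial.aeval f q) (zf ν) := by
        have := Finset.add_sum_erase S (fun ν => (Polynomial.aeval f q) (zf ν)) hμ
        rw [hsum] at this
        linear_combination (norm := module) this
      rw [heq]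
      refine neg_mem (Submodule.sum_mem _ fun ν hν => ?_)
      have hνμ : ν ≠ μ := Finset.ne_of_mem_erase hν
      have hle : f.maxGenEigenspace ν ≤ ⨆ ν', ⨆ _ : ν' ≠ μ, f.maxGenEigenspace ν' :=
        le_iSup₂ (f := fun ν' (_ : ν' ≠ μ) => f.maxGenEigenspace ν') ν hνμ
      exact hle (hmemV ν (Finset.mem_of_mem_erase hν))
    exact (Submodule.disjoint_def.mp hdis) _ (hmemV μ hμ) hmem2
  have hdvd : ∀ μ ∈ S, (X - C μ) ^ (d μ) ∣ q := fun μ hμ => horder μ hμ q (hzero μ hμ)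
  have hprod : (∏ μ ∈ S, (X - C μ) ^ (d μ)) ∣ q := by
    apply Finset.prod_dvd_of_coprime _ hdvd
    intro x _ y _ hxy
    exact ((Polynomial.pairwise_coprime_X_sub_C Function.injective_id hxy)).pow
  have hq0 : q = 0 := by
    by_contra hq0
    have h1 : (∏ μ ∈ S, (X - C μ) ^ (d μ)).natDegree = ∑ μ ∈ S, d μ := by
      rw [Polynomial.natDegree_prod _ _ fun μ _ =>
        pow_ne_zero _ (Polynomial.X_sub_C_ne_zero μ)]
      exact Finset.sum_congr rfl fun μ _ => by
        rw [Polynomial.natDegree_pow, Polynomial.natDegree_X_sub_C, mul_one]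
    have h2 : 4 ≤ ∑ μ ∈ S, d μ := by
      have h3 := finrank_biSup_le S V
      rw [hStop, finrank_top, hdim] at h3
      exact h3
    have h3 := Polynomial.natDegree_le_of_dvd hprod hq0
    have h4 : q.natDegree ≤ 3 := by
      apply Polynomial.natDegree_sum_le_of_forall_le
      intro k _
      refine le_trans (Polynomial.natDegree_C_mul_le _ _) ?_
      rw [Polynomial.natDegree_X_pow]
      omega
    omega
  intro k₀
  have hcoeff : q.coeff (k₀ : ℕ) = c k₀ := by
    rw [hqdef, Polynomial.finset_sum_coeff]
    rw [Finset.sum_eq_single k₀]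
    · simp [Polynomial.coeff_C_mul, Polynomial.coeff_X_pow]
    · intro k _ hk
      have hkk : (k : ℕ) ≠ (k₀ : ℕ) := fun h => hk (Fin.val_injective h)
      simp [Polynomial.coeff_C_mul, Polynomial.coeff_X_pow, hkk]
      intro hhh
      exact absurd (Fin.val_injective hhh.symm) hk
    · intro h
      exact absurd (Finset.mem_univ k₀) h
  rw [hq0, Polynomial.coeff_zero] at hcoeff
  exact hcoeff.symm

/-- The easy direction over `ℂ`: a cyclic vector forces geometric multiplicities `≤ 1`. -/
lemma geomMult_le_one_of_cyclic (A : Matrix (Fin 4) (Fin 4) ℂ) (z : Fin 4 → ℂ)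
    (hz : LinearIndependent ℂ (fun k : Fin 4 => (A ^ (k : ℕ)).mulVec z)) (μ : ℂ) :
    Module.finrank ℂ
      (LinearMap.ker (Matrix.toLin' (A - μ • (1 : Matrix (Fin 4) (Fin 4) ℂ)))) ≤ 1 := by
  classical
  by_contra hge
  push_neg at hge
  set f : Module.End ℂ (Fin 4 → ℂ) := Matrix.toLin' A with hfdef
  set g : Module.End ℂ (Fin 4 → ℂ) := f - μ • (1 : Module.End ℂ (Fin 4 → ℂ)) with hgdef
  have hdim : Module.finrank ℂ (Fin 4 → ℂ) = 4 := by simp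
  have hgk : Matrix.toLin' (A - μ • (1 : Matrix (Fin 4) (Fin 4) ℂ)) = g := by
    rw [map_sub, _root_.map_smul, Matrix.toLin'_one]
    rfl
  rw [hgk] at hge
  have hfz : ∀ k : ℕ, (f ^ k) z = (A ^ k).mulVec z := by
    intro k
    induction k with
    | zero => simp [Matrix.one_mulVec]
    | succ i ih =>
        rw [pow_succ', Module.End.mul_apply, ih, hfdef, Matrix.toLin'_apply,
          Matrix.mulVec_mulVec, ← pow_succ']
  have hz' : LinearIndependent ℂ (fun k : Fin 4 => (f ^ (k : ℕ)) z) := by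
    have : (fun k : Fin 4 => (f ^ (k : ℕ)) z) = fun k : Fin 4 => (A ^ (k : ℕ)).mulVec z := by
      funext k; exact hfz k
    rw [this]; exact hz
  -- span of the f-powers is everything
  have hspanf : Submodule.span ℂ (Set.range fun k : Fin 4 => (f ^ (k : ℕ)) z) = ⊤ := by
    apply Submodule.eq_top_of_finrank_eq
    rw [finrank_span_eq_card hz', hdim]
    simp
  -- f ^ k z lies in the span of the g-powers
  have hmem : ∀ k : ℕ, k ≤ 3 →
      (f ^ k) z ∈ Submodule.span ℂ (Set.range fun j : Fin 4 => (g ^ (j : ℕ)) z) := by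
    intro k hk
    have hfg : f = μ • (1 : Module.End ℂ (Fin 4 → ℂ)) + g := by rw [hgdef]; abel
    have hcomm : Commute (μ • (1 : Module.End ℂ (Fin 4 → ℂ))) g :=
      (Commute.one_left g).smul_left μ
    rw [hfg, hcomm.add_pow]
    rw [LinearMap.sum_apply]
    apply Submodule.sum_mem
    intro m hm
    rw [Finset.mem_range] at hm
    have hmk : m ≤ k := by omega
    have h1 : (μ • (1 : Module.End ℂ (Fin 4 → ℂ))) ^ m = μ ^ m • 1 := by
      rw [_root_.smul_pow, one_pow]
    rw [h1]
    have h2 : ((μ ^ m • (1 : Module.End ℂ (Fin 4 → ℂ))) * g ^ (k - m) * (k.choose m : ℂ) •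
        (1 : Module.End ℂ (Fin 4 → ℂ))) z = (μ ^ m * (k.choose m : ℂ)) • ((g ^ (k - m)) z) := by
      simp [Module.End.mul_apply, smul_smul, mul_comm]
    rw [show ((k.choose m : ℕ) : Module.End ℂ (Fin 4 → ℂ)) =
        (k.choose m : ℂ) • (1 : Module.End ℂ (Fin 4 → ℂ)) from by
      simp [Nat.cast_smul_eq_nsmul]]
    rw [h2]
    apply Submodule.smul_mem
    apply Submodule.subset_span
    exact ⟨⟨k - m, by omega⟩, rfl⟩
  have hspang : Submodule.span ℂ (Set.range fun j : Fin 4 => (g ^ (j : ℕ)) z) = ⊤ := by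
    refine le_antisymm le_top ?_
    rw [← hspanf]
    rw [Submodule.span_le]
    rintro x ⟨k, rfl⟩
    exact hmem (k : ℕ) (by omega)
  have hgind : LinearIndependent ℂ (fun j : Fin 4 => (g ^ (j : ℕ)) z) := by
    rw [linearIndependent_iff_card_eq_finrank_span]
    rw [Set.finrank, hspang, finrank_top, hdim]
    simp
  -- the three vectors g^1 z, g^2 z, g^3 z are independent and lie in range g
  have hsub : LinearIndependent ℂ (fun j : Fin 3 => (g ^ ((j : ℕ) + 1)) z) := by
    have := hgind.comp (fun j : Fin 3 => (⟨(j : ℕ) + 1, by omega⟩ : Fin 4))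
      (fun a b hab => by
        simp only [Fin.mk.injEq, add_left_inj] at hab
        exact Fin.val_injective hab)
    exact this
  have hspan3 : Submodule.span ℂ (Set.range fun j : Fin 3 => (g ^ ((j : ℕ) + 1)) z)
      ≤ LinearMap.range g := by
    rw [Submodule.span_le]
    rintro x ⟨j, rfl⟩
    exact ⟨(g ^ (j : ℕ)) z, by rw [← Module.End.mul_apply, ← pow_succ']⟩
  have h3 : 3 ≤ Module.finrank ℂ (LinearMap.range g) := by
    have h4 := finrank_span_eq_card hsub
    have h5 := Submodule.finrank_mono hspan3
    rw [h4] at h5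
    simpa using h5
  have h6 := LinearMap.finrank_range_add_finrank_ker g
  rw [hdim] at h6
  omega

end ComplexSide

section Transfer

open Polynomial NondegOrbitAux

/-- Real cyclic vectors exist iff complex ones do, by a polynomial density argument. -/
lemma real_cyclic_iff_complex_cyclic (v : Matrix (Fin 4) (Fin 4) ℝ) :
    (∃ x : Fin 4 → ℝ, LinearIndependent ℝ (fun k : Fin 4 => (v ^ (k : ℕ)).mulVec x)) ↔
      (∃ z : Fin 4 → ℂ, LinearIndependent ℂ
        (fun k : Fin 4 => ((v.map (fun x => (x : ℂ))) ^ (k : ℕ)).mulVec z)) := by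
  classical
  set A : Matrix (Fin 4) (Fin 4) ℂ := v.map (fun x => (x : ℂ)) with hAdef
  have hApow : ∀ k : ℕ, A ^ k = (v ^ k).map (fun x => (x : ℂ)) := by
    intro k
    rw [hAdef]
    induction k with
    | zero => simp [Matrix.map_one]
    | succ i ih =>
        rw [pow_succ, pow_succ, ih]
        ext a b
        simp [Matrix.mul_apply, Matrix.map_apply]
  set Pmat : Matrix (Fin 4) (Fin 4) (MvPolynomial (Fin 4) ℝ) :=
    Matrix.of fun k i : Fin 4 =>
      ∑ j : Fin 4, MvPolynomial.C ((v ^ (k : ℕ)) i j) * MvPolynomial.X j with hPmat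
  set P : MvPolynomial (Fin 4) ℝ := Pmat.det with hPdef
  have hevalR : ∀ x : Fin 4 → ℝ, MvPolynomial.eval x P =
      Matrix.det (Matrix.of fun k i : Fin 4 => ((v ^ (k : ℕ)).mulVec x) i) := by
    intro x
    rw [hPdef, RingHom.map_det]
    congr 1
    ext k i
    simp [hPmat, Matrix.mulVec, dotProduct]
  have hevalC : ∀ z : Fin 4 → ℂ,
      MvPolynomial.eval z (MvPolynomial.map (algebraMap ℝ ℂ) P) =
      Matrix.det (Matrix.of fun k i : Fin 4 => ((A ^ (k : ℕ)).mulVec z) i) := by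
    intro z
    rw [hPdef, RingHom.map_det, RingHom.map_det]
    congr 1
    ext k i
    simp [hPmat, hApow, Matrix.map_apply, Matrix.mulVec, dotProduct]
  have hRiff : ∀ x : Fin 4 → ℝ,
      LinearIndependent ℝ (fun k : Fin 4 => (v ^ (k : ℕ)).mulVec x) ↔
        MvPolynomial.eval x P ≠ 0 := by
    intro x
    rw [hevalR]
    exact Matrix.linearIndependent_rows_iff_isUnit.trans
      ((Matrix.isUnit_iff_isUnit_det _).trans isUnit_iff_ne_zero)
  have hCiff : ∀ z : Fin 4 → ℂ,
      LinearIndependent ℂ (fun k : Fin 4 => (A ^ (k : ℕ)).mulVec z) ↔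
        MvPolynomial.eval z (MvPolynomial.map (algebraMap ℝ ℂ) P) ≠ 0 := by
    intro z
    rw [hevalC]
    exact Matrix.linearIndependent_rows_iff_isUnit.trans
      ((Matrix.isUnit_iff_isUnit_det _).trans isUnit_iff_ne_zero)
  constructor
  · rintro ⟨x, hx⟩
    refine ⟨fun i => (x i : ℂ), ?_⟩
    rw [hCiff]
    have hcompat : MvPolynomial.eval (fun i => ((x i : ℝ) : ℂ))
        (MvPolynomial.map (algebraMap ℝ ℂ) P) = algebraMap ℝ ℂ (MvPolynomial.eval x P) := by
      rw [MvPolynomial.eval_map]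
      have h1 := MvPolynomial.eval₂_comp_left (algebraMap ℝ ℂ) (RingHom.id ℝ) x P
      rw [RingHom.comp_id] at h1
      exact h1.symm
    rw [hcompat]
    have hne := (hRiff x).mp hx
    simpa using hne
  · rintro ⟨z, hz⟩
    rw [hCiff] at hz
    have hPne : ¬ (∀ x : Fin 4 → ℝ, MvPolynomial.eval x P = 0) := by
      intro hall
      have hP0 : P = 0 := MvPolynomial.funext (fun x => by rw [hall]; simp)
      rw [hP0] at hz
      simp at hz
    push_neg at hPne
    obtain ⟨x, hxne⟩ := hPne
    exact ⟨x, (hRiff x).mpr hxne⟩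

end Transfer

theorem exists_nondegenerate_orbit_iff_geomMult_le_one (v : Matrix (Fin 4) (Fin 4) ℝ) :
    (∃ x₀ : Fin 4 → ℝ, ∀ t : ℝ,
        LinearIndependent ℝ
          (fun k : Fin 4 => (v ^ (k : ℕ)).mulVec ((NormedSpace.exp (t • v)).mulVec x₀)))
      ↔ ∀ μ : ℂ, geomMult v μ ≤ 1 := by
  have hmain : (∃ x₀ : Fin 4 → ℝ, ∀ t : ℝ,
        LinearIndependent ℝ
          (fun k : Fin 4 => (v ^ (k : ℕ)).mulVec ((NormedSpace.exp (t • v)).mulVec x₀)))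
      ↔ (∃ x : Fin 4 → ℝ, LinearIndependent ℝ (fun k : Fin 4 => (v ^ (k : ℕ)).mulVec x)) := by
    constructor
    · rintro ⟨x₀, hx⟩
      refine ⟨x₀, ?_⟩
      have h0 := hx 0
      rw [zero_smul, NormedSpace.exp_zero] at h0
      simpa [Matrix.one_mulVec] using h0
    · rintro ⟨x, hx⟩
      refine ⟨x, fun t => ?_⟩
      set E : Matrix (Fin 4) (Fin 4) ℝ := NormedSpace.exp (t • v) with hE
      have hunit : IsUnit E := Matrix.isUnit_exp (t • v)
      have hcommE : ∀ k : ℕ, v ^ k * E = E * v ^ k := fun k =>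
        ((((Commute.refl v).smul_right t).pow_left k).exp_right)
      have hrw : ∀ k : ℕ, (v ^ k).mulVec (E.mulVec x) = E.mulVec ((v ^ k).mulVec x) := by
        intro k
        rw [Matrix.mulVec_mulVec, Matrix.mulVec_mulVec, hcommE]
      have hinj : Function.Injective E.mulVec := Matrix.mulVec_injective_iff_isUnit.mpr hunit
      have hker : LinearMap.ker E.mulVecLin = ⊥ := by
        rw [LinearMap.ker_eq_bot]
        intro a b hab
        exact hinj hab
      have hli := hx.map' E.mulVecLin hker
      have : (fun k : Fin 4 => (v ^ (k : ℕ)).mulVec (E.mulVec x))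
          = E.mulVecLin ∘ fun k : Fin 4 => (v ^ (k : ℕ)).mulVec x := by
        funext k
        simp [Matrix.mulVecLin_apply, hrw]
      rw [this]
      exact hli
  rw [hmain, real_cyclic_iff_complex_cyclic]
  constructor
  · rintro ⟨z, hz⟩ μ
    exact geomMult_le_one_of_cyclic _ z hz μ
  · intro h
    exact exists_cyclic_of_geomMult_le_one _ (fun μ => h μ)
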